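/- Let N ≥ 1, σ ∈ (0,1), p ≥ 1, r ∈ [1, p], and θ > (N/r + 2σ)p. Let k ≤ j - 3 be integers, Ω ⊆ ℝ^N open, δ = dist(·, ∂Ω), A_m := {x ∈ Ω : 2^{-m-1} < δ(x) < 2^{-m+1}}, and let v : ℝ^N → ℝ be supported in A_j with v ∈ L^r(ℝ^N). Then for every x ∈ A_k and y ∈ A_j one has |x - y| ≥ 2^{-k-2}, and consequently ‖(-Δ)^σ v‖_{L^p(A_k)} ≤ C 2^{(N/r - N/p + 2σ)k} ‖v‖_{L^r(ℝ^N)}, where C depends only on N, σ, p, r. -/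

import Mathlib

/-!
Points of the layers `A_k` and `A_j` with `k ≤ j - 3` are at distance at least `R = 2^{-k-2}`,
because `δ` is 1-Lipschitz. Hence on `A_k` the integral `∫ v(y)/|x-y|^{N+2σ} dy` is dominated by
the convolution of `|v|` with the truncated kernel `|z|^{-N-2σ} 1_{|z| ≥ R}`, and Young's
convolution inequality with `1/p + 1 = 1/r + 1/q` bounds its `L^p` norm by `‖v‖_r` times the
`L^q` norm of that kernel. Rescaling `z ↦ R z`, the latter is
`R^{N/q - N - 2σ} = R^{-(N/r - N/p + 2σ)}` times the `L^q` norm of the kernel truncated at `1`,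
which is finite since `(N + 2σ) q > N`.
-/

open Real MeasureTheory Metric Set Filter Bornology
open scoped Topology ENNReal

/-- The dyadic boundary layer `A_m = {x ∈ Ω : 2^{-m-1} < δ(x) < 2^{-m+1}}`, where
`δ = dist(·, ∂Ω)`. -/
def layer {n : ℕ} (Ω : Set (EuclideanSpace ℝ (Fin n))) (m : ℤ) :
    Set (EuclideanSpace ℝ (Fin n)) :=
  {x ∈ Ω | (2:ℝ) ^ (-m - 1) < Metric.infDist x (frontier Ω)
      ∧ Metric.infDist x (frontier Ω) < (2:ℝ) ^ (-m + 1)}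

open Module (finrank)

section LpNorm

variable {α F : Type*} [MeasurableSpace α] {μ : Measure α} [NormedAddCommGroup F]

theorem eLpNorm_ofReal_eq_lintegral_rpow {f : α → ℝ≥0∞} {p : ℝ} (hp : 0 < p) :
    eLpNorm f (.ofReal p) μ = (∫⁻ x, f x ^ p ∂μ) ^ (1 / p) := by
  rw [eLpNorm_eq_lintegral_rpow_enorm_toReal (ENNReal.ofReal_pos.2 hp).ne' ENNReal.ofReal_ne_top,
    ENNReal.toReal_ofReal hp.le]
  simp only [enorm_eq_self]

theorem rpow_integral_norm_rpow_le_toReal_eLpNorm (f : α → F) {p : ℝ} (hp : 0 < p) :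
    (∫ x, ‖f x‖ ^ p ∂μ) ^ (1 / p) ≤ (eLpNorm f (.ofReal p) μ).toReal := by
  rw [eLpNorm_eq_lintegral_rpow_enorm_toReal (ENNReal.ofReal_pos.2 hp).ne' ENNReal.ofReal_ne_top,
    ENNReal.toReal_ofReal hp.le, ← ENNReal.toReal_rpow]
  gcongr
  refine (Real.le_norm_self _).trans ((norm_integral_le_lintegral_norm _).trans_eq ?_)
  congr with x
  rw [Real.norm_of_nonneg (by positivity), ← ofReal_norm, ENNReal.ofReal_rpow_of_nonneg
    (norm_nonneg _) hp.le]

theorem toReal_eLpNorm_ofReal {f : α → F} (hf : AEStronglyMeasurable f μ) {p : ℝ} (hp : 0 < p) :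
    (eLpNorm f (.ofReal p) μ).toReal = (∫ x, ‖f x‖ ^ p ∂μ) ^ (1 / p) := by
  rw [toReal_eLpNorm hf, lpNorm_eq_integral_norm_rpow_toReal (by simpa using hp) (by simp) hf,
    ENNReal.toReal_ofReal hp.le, one_div]

end LpNorm

section Young

theorem exists_young_exponent {p r : ℝ} (hr : 1 ≤ r) (hrp : r ≤ p) :
    ∃ q : ℝ, 1 ≤ q ∧ 1 / p + 1 = 1 / r + 1 / q := by
  have : 1 / p ≤ 1 / r := one_div_le_one_div_of_le (by linarith) hrp
  have : 1 / r ≤ 1 := div_le_one_of_le₀ hr (by linarith)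
  have : 0 < 1 / p := one_div_pos.2 (by linarith)
  refine ⟨(1 + 1 / p - 1 / r)⁻¹, one_le_inv_iff₀.2 ⟨by linarith, by linarith⟩, ?_⟩
  rw [one_div (1 + 1 / p - 1 / r)⁻¹, inv_inv]
  ring

theorem lintegral_mul_le_of_young_exponents {α : Type*} [MeasurableSpace α] {μ : Measure α}
    {f g : α → ℝ≥0∞} (hf : AEMeasurable f μ) (hg : AEMeasurable g μ) {p q r : ℝ}
    (hp : 0 < p) (hr : 1 ≤ r) (hq : 1 ≤ q) (hpqr : 1 / p + 1 = 1 / r + 1 / q) :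
    ∫⁻ a, f a * g a ∂μ ≤ (∫⁻ a, f a ^ r * g a ^ q ∂μ) ^ (1 / p)
      * (∫⁻ a, f a ^ r ∂μ) ^ (1 - 1 / q) * (∫⁻ a, g a ^ q ∂μ) ^ (1 - 1 / r) := by
  have one_sub_nonneg {t : ℝ} (ht : 1 ≤ t) : 0 ≤ 1 - 1 / t :=
    sub_nonneg.2 (div_le_one_of_le₀ ht (by linarith))
  have split {a : ℝ≥0∞} {s t : ℝ} (hs : 1 ≤ s) (ht : 1 ≤ t) (hst : 1 / p + (1 - 1 / t) = 1 / s) :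
      a = (a ^ s) ^ (1 / p) * (a ^ s) ^ (1 - 1 / t) := by
    rw [← ENNReal.rpow_mul, ← ENNReal.rpow_mul, ← ENNReal.rpow_add_of_nonneg _ _
      (by positivity) (mul_nonneg (by linarith) (one_sub_nonneg ht)), ← mul_add, hst,
      mul_one_div_cancel (by linarith), ENNReal.rpow_one]
  have hpt : ∀ a, f a * g a
      = (f a ^ r * g a ^ q) ^ (1 / p) * ((f a ^ r) ^ (1 - 1 / q) * (g a ^ q) ^ (1 - 1 / r)) := by
    intro a
    rw [ENNReal.mul_rpow_of_nonneg _ _ (by positivity), mul_mul_mul_comm,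
      ← split hr hq (by linarith), ← split hq hr (by linarith)]
  rw [lintegral_congr hpt, mul_assoc]
  have := ENNReal.lintegral_mul_prod_norm_pow_le Finset.univ (g := fun a ↦ f a ^ r * g a ^ q)
    (f := ![fun a ↦ f a ^ r, fun a ↦ g a ^ q]) ((hf.pow_const r).mul (hg.pow_const q))
    (fun i _ ↦ by fin_cases i <;> simp [hf.pow_const r, hg.pow_const q]) (1 / p)
    (p := ![1 - 1 / q, 1 - 1 / r])
    (by simp only [Fin.sum_univ_two, Matrix.cons_val_zero, Matrix.cons_val_one]; linarith)
    (by positivity) (fun i _ ↦ by fin_cases i; exacts [one_sub_nonneg hq, one_sub_nonneg hr])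
  simpa [Fin.prod_univ_two] using this

variable {G : Type*} [MeasurableSpace G] [AddCommGroup G] [MeasurableAdd₂ G] [MeasurableNeg G]
  {μ : Measure G} [SFinite μ] [μ.IsAddLeftInvariant]

theorem lintegral_lconvolution {f g : G → ℝ≥0∞} (hf : AEMeasurable f μ) (hg : AEMeasurable g μ) :
    ∫⁻ x, (f ⋆ₗ[μ] g) x ∂μ = (∫⁻ y, f y ∂μ) * ∫⁻ z, g z ∂μ := by
  simp only [lconvolution_def]
  rw [lintegral_lintegral_swap (by fun_prop), ← lintegral_mul_const'' _ hf]
  congr with y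
  rw [lintegral_const_mul'' _ (by fun_prop), lintegral_add_left_eq_self]

theorem lintegral_lconvolution_rpow_le [μ.IsNegInvariant] {f g : G → ℝ≥0∞} (hf : AEMeasurable f μ)
    (hg : AEMeasurable g μ) {p q r : ℝ} (hp : 0 < p) (hr : 1 ≤ r) (hq : 1 ≤ q)
    (hpqr : 1 / p + 1 = 1 / r + 1 / q) :
    ∫⁻ x, (f ⋆ₗ[μ] g) x ^ p ∂μ ≤ (∫⁻ y, f y ^ r ∂μ) ^ (p / r) * (∫⁻ z, g z ^ q ∂μ) ^ (p / q) := by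
  set B := (∫⁻ y, f y ^ r ∂μ) ^ (1 - 1 / q) * (∫⁻ z, g z ^ q ∂μ) ^ (1 - 1 / r)
  have holder (x : G) :
      (f ⋆ₗ[μ] g) x ^ p ≤ ((fun y ↦ f y ^ r) ⋆ₗ[μ] fun z ↦ g z ^ q) x * B ^ p := by
    have hI : ∫⁻ y, g (-y + x) ^ q ∂μ = ∫⁻ z, g z ^ q ∂μ := by
      simpa [neg_add_eq_sub] using lintegral_sub_left_eq_self (fun z ↦ g z ^ q) x (μ := μ)
    calc (f ⋆ₗ[μ] g) x ^ p
        ≤ ((∫⁻ y, f y ^ r * g (-y + x) ^ q ∂μ) ^ (1 / p) * B) ^ p := by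
          gcongr
          have h := lintegral_mul_le_of_young_exponents (g := fun y ↦ g (-y + x)) hf (by fun_prop)
            hp hr hq hpqr
          rwa [hI, mul_assoc] at h
      _ = _ := by
          rw [ENNReal.mul_rpow_of_nonneg _ _ hp.le, ← ENNReal.rpow_mul, one_div_mul_cancel hp.ne',
            ENNReal.rpow_one, lconvolution_def]
  have exponent {s t : ℝ} (hs : 1 ≤ s) (ht : 1 ≤ t) (hst : 1 / p + (1 - 1 / t) = 1 / s) :
      1 + (1 - 1 / t) * p = p / s := by
    rw [div_eq_mul_one_div p s, ← hst]; field_simp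
  calc ∫⁻ x, (f ⋆ₗ[μ] g) x ^ p ∂μ
      ≤ ∫⁻ x, ((fun y ↦ f y ^ r) ⋆ₗ[μ] fun z ↦ g z ^ q) x * B ^ p ∂μ := lintegral_mono holder
    _ = (∫⁻ y, f y ^ r ∂μ) * (∫⁻ z, g z ^ q ∂μ) * B ^ p := by
      rw [lintegral_mul_const'' _ (by fun_prop), lintegral_lconvolution (by fun_prop) (by fun_prop)]
    _ = (∫⁻ y, f y ^ r ∂μ) ^ (p / r) * (∫⁻ z, g z ^ q ∂μ) ^ (p / q) := by
      have hq' : 0 ≤ 1 - 1 / q := sub_nonneg.2 (div_le_one_of_le₀ hq (by linarith))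
      have hr' : 0 ≤ 1 - 1 / r := sub_nonneg.2 (div_le_one_of_le₀ hr (by linarith))
      rw [ENNReal.mul_rpow_of_nonneg _ _ hp.le, ← ENNReal.rpow_mul, ← ENNReal.rpow_mul,
        ← exponent hr hq (by linarith), ← exponent hq hr (by linarith),
        ENNReal.rpow_add_of_nonneg _ _ zero_le_one (by positivity),
        ENNReal.rpow_add_of_nonneg _ _ zero_le_one (by positivity), ENNReal.rpow_one,
        ENNReal.rpow_one]
      ring

theorem eLpNorm_lconvolution_le [μ.IsNegInvariant] {f g : G → ℝ≥0∞} (hf : AEMeasurable f μ)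
    (hg : AEMeasurable g μ) {p q r : ℝ} (hp : 0 < p) (hr : 1 ≤ r) (hq : 1 ≤ q)
    (hpqr : 1 / p + 1 = 1 / r + 1 / q) :
    eLpNorm (f ⋆ₗ[μ] g) (.ofReal p) μ ≤ eLpNorm f (.ofReal r) μ * eLpNorm g (.ofReal q) μ := by
  rw [eLpNorm_ofReal_eq_lintegral_rpow hp, eLpNorm_ofReal_eq_lintegral_rpow (by linarith),
    eLpNorm_ofReal_eq_lintegral_rpow (by linarith)]
  calc (∫⁻ x, (f ⋆ₗ[μ] g) x ^ p ∂μ) ^ (1 / p)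
      ≤ ((∫⁻ y, f y ^ r ∂μ) ^ (p / r) * (∫⁻ z, g z ^ q ∂μ) ^ (p / q)) ^ (1 / p) := by
        gcongr
        exact lintegral_lconvolution_rpow_le hf hg hp hr hq hpqr
    _ = _ := by
        rw [ENNReal.mul_rpow_of_nonneg _ _ (by positivity), ← ENNReal.rpow_mul, ← ENNReal.rpow_mul]
        field_simp

end Young

section PowerKernel

variable {E : Type*} [NormedAddCommGroup E]

noncomputable def truncatedPowerKernel (s R : ℝ) (z : E) : ℝ≥0∞ :=
  {z : E | R ≤ ‖z‖}.indicator (fun z ↦ ENNReal.ofReal (‖z‖ ^ (-s))) z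

theorem truncatedPowerKernel_of_le {s R : ℝ} {z : E} (hz : R ≤ ‖z‖) :
    truncatedPowerKernel s R z = ENNReal.ofReal (‖z‖ ^ (-s)) :=
  indicator_of_mem (show z ∈ {z : E | R ≤ ‖z‖} from hz) _

theorem truncatedPowerKernel_of_lt {s R : ℝ} {z : E} (hz : ‖z‖ < R) :
    truncatedPowerKernel s R z = 0 :=
  indicator_of_notMem (show z ∉ {z : E | R ≤ ‖z‖} from hz.not_ge) _

theorem truncatedPowerKernel_rpow {s R q : ℝ} (hq : 0 < q) (z : E) :
    truncatedPowerKernel s R z ^ q = truncatedPowerKernel (s * q) R z := by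
  rcases le_or_gt R ‖z‖ with hz | hz
  · rw [truncatedPowerKernel_of_le hz, truncatedPowerKernel_of_le hz,
      ENNReal.ofReal_rpow_of_nonneg (by positivity) hq.le, ← Real.rpow_mul (norm_nonneg z), neg_mul]
  · rw [truncatedPowerKernel_of_lt hz, truncatedPowerKernel_of_lt hz, ENNReal.zero_rpow_of_pos hq]

theorem truncatedPowerKernel_smul [NormedSpace ℝ E] {s R : ℝ} (hR : 0 < R) (z : E) :
    truncatedPowerKernel s R (R • z) = ENNReal.ofReal (R ^ (-s)) * truncatedPowerKernel s 1 z := by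
  have hnorm : ‖R • z‖ = R * ‖z‖ := by rw [norm_smul, Real.norm_of_nonneg hR.le]
  rcases le_or_gt 1 ‖z‖ with hz | hz
  · rw [truncatedPowerKernel_of_le (by rw [hnorm]; exact le_mul_of_one_le_right hR.le hz),
      truncatedPowerKernel_of_le hz, hnorm, Real.mul_rpow hR.le (norm_nonneg z),
      ENNReal.ofReal_mul (by positivity)]
  · rw [truncatedPowerKernel_of_lt (by rw [hnorm]; exact mul_lt_of_lt_one_right hR hz),
      truncatedPowerKernel_of_lt hz, mul_zero]

theorem eLpNorm_truncatedPowerKernel_eq_lintegral [MeasurableSpace E] (μ : Measure E)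
    {s R q : ℝ} (hq : 0 < q) :
    eLpNorm (truncatedPowerKernel s R) (.ofReal q) μ
      = (∫⁻ z, truncatedPowerKernel (s * q) R z ∂μ) ^ (1 / q) := by
  simp only [eLpNorm_ofReal_eq_lintegral_rpow hq, truncatedPowerKernel_rpow hq]

variable [MeasurableSpace E] [BorelSpace E]

@[fun_prop]
theorem measurable_truncatedPowerKernel (s R : ℝ) :
    Measurable (truncatedPowerKernel s R : E → ℝ≥0∞) :=
  (by fun_prop : Measurable fun z : E ↦ ENNReal.ofReal (‖z‖ ^ (-s))).indicator
    (measurableSet_le measurable_const measurable_norm)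

variable [NormedSpace ℝ E] [FiniteDimensional ℝ E] (μ : Measure E) [μ.IsAddHaarMeasure]

theorem lintegral_truncatedPowerKernel {s R : ℝ} (hR : 0 < R) :
    ∫⁻ z, truncatedPowerKernel s R z ∂μ
      = ENNReal.ofReal (R ^ ((finrank ℝ E : ℝ) - s)) * ∫⁻ z, truncatedPowerKernel s 1 z ∂μ := by
  have hRd : 0 < R ^ finrank ℝ E := by positivity
  have hmap : ∫⁻ z, truncatedPowerKernel s R (R • z) ∂μ
      = (ENNReal.ofReal (R ^ finrank ℝ E))⁻¹ * ∫⁻ z, truncatedPowerKernel s R z ∂μ := by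
    rw [← lintegral_map (by fun_prop) (measurable_const_smul R),
      Measure.map_addHaar_smul μ hR.ne', lintegral_smul_measure, smul_eq_mul,
      abs_of_pos (inv_pos.2 hRd), ENNReal.ofReal_inv_of_pos hRd]
  simp_rw [truncatedPowerKernel_smul hR] at hmap
  rw [lintegral_const_mul _ (by fun_prop)] at hmap
  rw [← one_mul (∫⁻ z, truncatedPowerKernel s R z ∂μ),
    ← ENNReal.mul_inv_cancel (ENNReal.ofReal_pos.2 hRd).ne' ENNReal.ofReal_ne_top, mul_assoc,
    ← hmap, ← mul_assoc, ← ENNReal.ofReal_mul hRd.le, ← Real.rpow_natCast, ← Real.rpow_add hR,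
    ← sub_eq_add_neg]

theorem lintegral_truncatedPowerKernel_one_lt_top {s : ℝ} (hs : (finrank ℝ E : ℝ) < s) :
    ∫⁻ z, truncatedPowerKernel s 1 z ∂μ < ⊤ := by
  have hle (z : E) :
      truncatedPowerKernel s 1 z ≤ ENNReal.ofReal (2 ^ s) * ENNReal.ofReal ((1 + ‖z‖) ^ (-s)) := by
    rcases le_or_gt 1 ‖z‖ with hz | hz
    · have hz0 : 0 < ‖z‖ := by linarith
      rw [truncatedPowerKernel_of_le hz, ← ENNReal.ofReal_mul (by positivity)]
      refine ENNReal.ofReal_le_ofReal ?_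
      calc ‖z‖ ^ (-s) = 2 ^ s * (2 * ‖z‖) ^ (-s) := by
            rw [Real.mul_rpow zero_le_two hz0.le, ← mul_assoc, ← Real.rpow_add zero_lt_two,
              add_neg_cancel, Real.rpow_zero, one_mul]
        _ ≤ 2 ^ s * (1 + ‖z‖) ^ (-s) := by
            gcongr 2 ^ s * ?_
            exact Real.rpow_le_rpow_of_nonpos (by positivity) (by linarith) (by linarith)
    · rw [truncatedPowerKernel_of_lt hz]
      exact zero_le
  calc ∫⁻ z, truncatedPowerKernel s 1 z ∂μ
      ≤ ∫⁻ z, ENNReal.ofReal (2 ^ s) * ENNReal.ofReal ((1 + ‖z‖) ^ (-s)) ∂μ := lintegral_mono hle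
    _ < ⊤ := by
      rw [lintegral_const_mul' _ _ ENNReal.ofReal_ne_top]
      exact ENNReal.mul_lt_top ENNReal.ofReal_lt_top (finite_integral_one_add_norm hs)

theorem eLpNorm_truncatedPowerKernel {s R q : ℝ} (hq : 0 < q) (hR : 0 < R) :
    eLpNorm (truncatedPowerKernel s R) (.ofReal q) μ
      = ENNReal.ofReal (R ^ ((finrank ℝ E : ℝ) / q - s))
        * eLpNorm (truncatedPowerKernel s 1) (.ofReal q) μ := by
  rw [eLpNorm_truncatedPowerKernel_eq_lintegral μ hq,
    eLpNorm_truncatedPowerKernel_eq_lintegral μ hq, lintegral_truncatedPowerKernel μ hR,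
    ENNReal.mul_rpow_of_nonneg _ _ (by positivity), ENNReal.ofReal_rpow_of_nonneg (by positivity) (by positivity), ← Real.rpow_mul hR.le]
  congr 3
  field_simp

theorem eLpNorm_truncatedPowerKernel_one_lt_top {s q : ℝ} (hq : 0 < q)
    (hsq : (finrank ℝ E : ℝ) < s * q) :
    eLpNorm (truncatedPowerKernel s 1) (.ofReal q) μ < ⊤ := by
  rw [eLpNorm_truncatedPowerKernel_eq_lintegral μ hq]
  exact ENNReal.rpow_lt_top_of_nonneg (by positivity)
    (lintegral_truncatedPowerKernel_one_lt_top μ hsq).ne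

end PowerKernel

section FarField

variable {E : Type*} [NormedAddCommGroup E] [MeasurableSpace E] {μ : Measure E}

theorem enorm_integral_div_rpow_le_lconvolution {v : E → ℝ} {x : E} {R s : ℝ}
    (hsep : ∀ y, v y ≠ 0 → R ≤ ‖x - y‖) :
    ‖∫ y, v y / ‖x - y‖ ^ s ∂μ‖ₑ ≤ ((‖v ·‖ₑ) ⋆ₗ[μ] truncatedPowerKernel s R) x := by
  refine (enorm_integral_le_lintegral_enorm _).trans (lintegral_mono fun y ↦ ?_)
  rw [neg_add_eq_sub]
  by_cases hy : v y = 0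
  · simp [hy]
  · rw [truncatedPowerKernel_of_le (hsep y hy), div_eq_mul_inv, enorm_mul,
      ← Real.rpow_neg (norm_nonneg _),
      Real.enorm_of_nonneg (Real.rpow_nonneg (norm_nonneg (x - y)) _)]

variable [NormedSpace ℝ E] [BorelSpace E] [FiniteDimensional ℝ E] [μ.IsAddHaarMeasure]

theorem eLpNorm_integral_div_rpow_le {v : E → ℝ} (hv : AEStronglyMeasurable v μ) {A : Set E}
    (hA : MeasurableSet A) {R s p q r : ℝ} (hR : 0 < R) (hp : 0 < p) (hr : 1 ≤ r) (hq : 1 ≤ q)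
    (hpqr : 1 / p + 1 = 1 / r + 1 / q) (hsep : ∀ x ∈ A, ∀ y, v y ≠ 0 → R ≤ ‖x - y‖) :
    eLpNorm (fun x ↦ ∫ y, v y / ‖x - y‖ ^ s ∂μ) (.ofReal p) (μ.restrict A)
      ≤ ENNReal.ofReal (R ^ ((finrank ℝ E : ℝ) / q - s))
        * eLpNorm (truncatedPowerKernel s 1) (.ofReal q) μ * eLpNorm v (.ofReal r) μ := by
  calc eLpNorm (fun x ↦ ∫ y, v y / ‖x - y‖ ^ s ∂μ) (.ofReal p) (μ.restrict A)
      ≤ eLpNorm ((‖v ·‖ₑ) ⋆ₗ[μ] truncatedPowerKernel s R) (.ofReal p) (μ.restrict A) :=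
        eLpNorm_mono_enorm_ae <| ae_restrict_of_forall_mem hA fun x hx ↦
          (enorm_integral_div_rpow_le_lconvolution (hsep x hx)).trans_eq (enorm_eq_self _).symm
    _ ≤ eLpNorm ((‖v ·‖ₑ) ⋆ₗ[μ] truncatedPowerKernel s R) (.ofReal p) μ :=
        eLpNorm_mono_measure _ Measure.restrict_le_self
    _ ≤ eLpNorm (‖v ·‖ₑ) (.ofReal r) μ * eLpNorm (truncatedPowerKernel s R) (.ofReal q) μ :=
        eLpNorm_lconvolution_le hv.enorm (by fun_prop) hp hr hq hpqr
    _ = _ := by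
        rw [eLpNorm_enorm, eLpNorm_truncatedPowerKernel μ (by linarith) hR]
        ring

theorem rpow_setIntegral_abs_mul_integral_div_rpow_le {v : E → ℝ} {A : Set E} {R s p q r : ℝ}
    (hv : MemLp v (.ofReal r) μ) (hA : MeasurableSet A) (hR : 0 < R) (hp : 0 < p) (hr : 1 ≤ r)
    (hq : 1 ≤ q) (hpqr : 1 / p + 1 = 1 / r + 1 / q) (hsq : (finrank ℝ E : ℝ) < s * q)
    (hsep : ∀ x ∈ A, ∀ y, v y ≠ 0 → R ≤ ‖x - y‖) (c : ℝ) :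
    (∫ x in A, |c * ∫ y, v y / ‖x - y‖ ^ s ∂μ| ^ p ∂μ) ^ (1 / p)
      ≤ |c| * R ^ ((finrank ℝ E : ℝ) / q - s)
        * (eLpNorm (truncatedPowerKernel s 1) (.ofReal q) μ).toReal
        * (∫ y, |v y| ^ r ∂μ) ^ (1 / r) := by
  set I := fun x ↦ ∫ y, v y / ‖x - y‖ ^ s ∂μ
  have hκ := eLpNorm_truncatedPowerKernel_one_lt_top μ (by linarith) hsq
  calc (∫ x in A, |c * I x| ^ p ∂μ) ^ (1 / p)
      ≤ (eLpNorm (c • I) (.ofReal p) (μ.restrict A)).toReal := by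
        simpa using rpow_integral_norm_rpow_le_toReal_eLpNorm (μ := μ.restrict A) (c • I) hp
    _ = |c| * (eLpNorm I (.ofReal p) (μ.restrict A)).toReal := by
        rw [eLpNorm_const_smul, ENNReal.toReal_mul, toReal_enorm, Real.norm_eq_abs]
    _ ≤ |c| * (ENNReal.ofReal (R ^ ((finrank ℝ E : ℝ) / q - s))
          * eLpNorm (truncatedPowerKernel s 1) (.ofReal q) μ * eLpNorm v (.ofReal r) μ).toReal := by
        gcongr
        · exact ENNReal.mul_ne_top (ENNReal.mul_ne_top ENNReal.ofReal_ne_top hκ.ne) hv.2.ne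
        · exact eLpNorm_integral_div_rpow_le hv.1 hA hR hp hr hq hpqr hsep
    _ = _ := by
        rw [ENNReal.toReal_mul, ENNReal.toReal_mul, ENNReal.toReal_ofReal (by positivity),
          toReal_eLpNorm_ofReal hv.1 (by linarith)]
        simp only [Real.norm_eq_abs, mul_assoc]

end FarField

section Layers

variable {n : ℕ} {Ω : Set (EuclideanSpace ℝ (Fin n))}

theorem IsOpen.layer (hΩ : IsOpen Ω) (m : ℤ) : IsOpen (layer Ω m) :=
  hΩ.inter (isOpen_Ioo.preimage (continuous_infDist_pt _))

theorem le_norm_sub_of_mem_layer {k j : ℤ} (hkj : k ≤ j - 3) {x y : EuclideanSpace ℝ (Fin n)}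
    (hx : x ∈ layer Ω k) (hy : y ∈ layer Ω j) : (2 : ℝ) ^ (-k - 2) ≤ ‖x - y‖ := by
  have hj : (2 : ℝ) ^ (-j + 1) ≤ 2 ^ (-k - 2) := zpow_le_zpow_right₀ one_le_two (by omega)
  have hk : (2 : ℝ) ^ (-k - 1) = 2 * 2 ^ (-k - 2) := by
    rw [show -k - 1 = 1 + (-k - 2) by ring, zpow_add₀ two_ne_zero, zpow_one]
  have := infDist_le_infDist_add_dist (x := x) (y := y) (s := frontier Ω)
  rw [← dist_eq_norm]
  linarith [hx.2.1, hy.2.2]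

end Layers

-- On `A_k` the fractional Laplacian `(-Δ)^σ v` is the absolutely convergent integral
-- `-c ∫ v(y)/|x-y|^{N+2σ} dy`, since `v` vanishes near every point of `A_k`.
theorem stmt17_general (n : ℕ) (σ p r c : ℝ) (hσ : σ ∈ Ioo (0:ℝ) 1)
    (hp : 1 ≤ p) (hr : 1 ≤ r) (hrp : r ≤ p) :
    ∃ C > (0:ℝ), ∀ θ : ℝ, ((n : ℝ) / r + 2 * σ) * p < θ →
      ∀ (Ω : Set (EuclideanSpace ℝ (Fin n))), IsOpen Ω →
      ∀ k j : ℤ, k ≤ j - 3 →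
      ∀ v : EuclideanSpace ℝ (Fin n) → ℝ,
        MeasureTheory.MemLp v (ENNReal.ofReal r) volume →
        (∀ y, y ∉ layer Ω j → v y = 0) →
      (∀ x ∈ layer Ω k, ∀ y ∈ layer Ω j, (2:ℝ) ^ (-k - 2) ≤ ‖x - y‖)
      ∧ (∫ x in layer Ω k,
            |c * ∫ y, v y / ‖x - y‖ ^ ((n : ℝ) + 2 * σ)| ^ p) ^ (1 / p)
          ≤ C * (2 : ℝ) ^ (((n : ℝ) / r - (n : ℝ) / p + 2 * σ) * (k : ℝ))
              * (∫ y, |v y| ^ r) ^ (1 / r) := by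
  obtain ⟨q, hq, hpqr⟩ := exists_young_exponent hr hrp
  set s : ℝ := n + 2 * σ
  set a : ℝ := n / r - n / p + 2 * σ
  set κ := (eLpNorm (truncatedPowerKernel s 1 : EuclideanSpace ℝ (Fin n) → ℝ≥0∞)
    (.ofReal q) volume).toReal
  have hκ : 0 ≤ κ := ENNReal.toReal_nonneg
  have hsq : (finrank ℝ (EuclideanSpace ℝ (Fin n)) : ℝ) < s * q := by
    rw [finrank_euclideanSpace_fin]; nlinarith [hσ.1]
  have hexp : (finrank ℝ (EuclideanSpace ℝ (Fin n)) : ℝ) / q - s = -a := by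
    rw [finrank_euclideanSpace_fin, div_eq_mul_one_div _ q,
      show 1 / q = 1 / p + 1 - 1 / r by linarith]
    simp only [s, a]
    ring
  refine ⟨|c| * 2 ^ (2 * a) * κ + 1, by positivity, fun θ _ Ω hΩ k j hkj v hv hsupp ↦
    ⟨fun x hx y hy ↦ le_norm_sub_of_mem_layer hkj hx hy, ?_⟩⟩
  calc _ ≤ |c| * ((2 : ℝ) ^ (-k - 2)) ^ (-a) * κ * (∫ y, |v y| ^ r) ^ (1 / r) := by
        rw [← hexp]
        exact rpow_setIntegral_abs_mul_integral_div_rpow_le hv (hΩ.layer k).measurableSet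
          (by positivity) (by linarith) hr hq hpqr hsq
          (fun x hx y hy ↦ le_norm_sub_of_mem_layer hkj hx (not_imp_comm.1 (hsupp y) hy)) c
    _ = |c| * 2 ^ (2 * a) * κ * (2 ^ (a * k) * (∫ y, |v y| ^ r) ^ (1 / r)) := by
        rw [← Real.rpow_intCast, ← Real.rpow_mul zero_le_two, show ((-k - 2 : ℤ) : ℝ) * -a
          = 2 * a + a * k by push_cast; ring, Real.rpow_add zero_lt_two]
        ring
    _ ≤ _ := by
        rw [mul_assoc _ (2 ^ (a * k))]
        gcongr
        linarith

/-- For `k ≤ j - 3` and `v ∈ L^r(ℝ^N)` supported in the layer `A_j`: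
every `x ∈ A_k`, `y ∈ A_j` satisfy `|x - y| ≥ 2^{-k-2}`, and
`‖(-Δ)^σ v‖_{L^p(A_k)} ≤ C 2^{(N/r - N/p + 2σ)k} ‖v‖_{L^r(ℝ^N)}`, where on `A_k` the
fractional Laplacian is the absolutely convergent integral
`(-Δ)^σ v(x) = -c ∫ v(y)/|x-y|^{N+2σ} dy`, and `C` depends only on `N, σ, p, r` (and `c`). -/
theorem stmt17 (n : ℕ) (hn : 0 < n) (σ p r c : ℝ) (hσ : σ ∈ Ioo (0:ℝ) 1)
    (hp : 1 ≤ p) (hr : 1 ≤ r) (hrp : r ≤ p) (hc : 0 < c) :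
    ∃ C > (0:ℝ), ∀ θ : ℝ, ((n : ℝ) / r + 2 * σ) * p < θ →
      ∀ (Ω : Set (EuclideanSpace ℝ (Fin n))), IsOpen Ω →
      ∀ k j : ℤ, k ≤ j - 3 →
      ∀ v : EuclideanSpace ℝ (Fin n) → ℝ,
        MeasureTheory.MemLp v (ENNReal.ofReal r) volume →
        (∀ y, y ∉ layer Ω j → v y = 0) →
      (∀ x ∈ layer Ω k, ∀ y ∈ layer Ω j, (2:ℝ) ^ (-k - 2) ≤ ‖x - y‖)
      ∧ (∫ x in layer Ω k,
            |c * ∫ y, v y / ‖x - y‖ ^ ((n : ℝ) + 2 * σ)| ^ p) ^ (1 / p)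
          ≤ C * (2 : ℝ) ^ (((n : ℝ) / r - (n : ℝ) / p + 2 * σ) * (k : ℝ))
              * (∫ y, |v y| ^ r) ^ (1 / r) :=
  stmt17_general n σ p r c hσ hp hr hrp
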